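/- Let X = ⋃_{n≥0} L_n ⊆ ℝ², where L₀ is the segment [0,1] × {0} and, for each n ≥ 1, L_n is the straight line segment joining (0,0) to (1, 1/n). Then X (with the subspace topology) is contractible, yet there exists no continuous map s : X × X → C([0,1], X) such that s(x,y)(0) = x and s(x,y)(1) = y for all (x,y) ∈ X × X and s(x,x) is the constant path at x for every x ∈ X; in particular tc^M(X) > 0 while tc(X) = 0, so monoidal topological complexity is not a homotopy invariant. -/

import Mathlib

open scoped ENat

/-- A subset `A ⊆ X × X` admits a continuous local section of the path fibration
`π_X : X^I → X × X`, `α ↦ (α(0), α(1))`. -/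
def HasLocalSectionPi {X : Type*} [TopologicalSpace X] (A : Set (X × X)) : Prop :=
  ∃ s : C(A, C(unitInterval, X)), ∀ a : A, ((s a) 0, (s a) 1) = (a : X × X)

/-- Topological complexity: least `n` (or `∞`) such that `X × X` is covered by `n+1`
open subsets each admitting a local section of `π_X`. -/
noncomputable def tc (X : Type*) [TopologicalSpace X] : ℕ∞ :=
  sInf {m : ℕ∞ | ∃ n : ℕ, m = n ∧ ∃ A : Fin (n + 1) → Set (X × X),
    (⋃ i, A i) = Set.univ ∧ ∀ i, IsOpen (A i) ∧ HasLocalSectionPi (A i)}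

/-- A reserved local section of `π_X` on `A`: a continuous section sending each diagonal
point `(x, x) ∈ A` to the constant path at `x`. -/
def HasReservedSection {X : Type*} [TopologicalSpace X] (A : Set (X × X)) : Prop :=
  ∃ s : C(A, C(unitInterval, X)),
    (∀ a : A, ((s a) 0, (s a) 1) = (a : X × X)) ∧
    ∀ (x : X) (h : (x, x) ∈ A) (t : unitInterval), (s ⟨(x, x), h⟩) t = x

/-- Monoidal topological complexity: least `n` (or `∞`) such that `X × X` is covered by
`n+1` open subsets, each containing the diagonal and admitting a reserved local section
of `π_X`. -/
noncomputable def tcM (X : Type*) [TopologicalSpace X] : ℕ∞ :=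
  sInf {m : ℕ∞ | ∃ n : ℕ, m = n ∧ ∃ U : Fin (n + 1) → Set (X × X),
    (⋃ i, U i) = Set.univ ∧
    ∀ i, IsOpen (U i) ∧ (∀ x : X, (x, x) ∈ U i) ∧ HasReservedSection (U i)}

/-- The comb-like subspace `X = ⋃ₙ Lₙ ⊆ ℝ²`, where `L₀ = [0,1] × {0}` and, for `n ≥ 1`,
`Lₙ` is the segment joining `(0,0)` to `(1, 1/n)`. -/
def combSpace : Set (ℝ × ℝ) :=
  segment ℝ ((0 : ℝ), (0 : ℝ)) ((1 : ℝ), (0 : ℝ)) ∪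
    ⋃ n : ℕ, segment ℝ ((0 : ℝ), (0 : ℝ)) ((1 : ℝ), 1 / ((n : ℝ) + 1))

/-!
Contractibility is immediate: `combSpace` is star-shaped about the origin. A reserved
motion planner `s`, however, would be continuous at `(p, p)` for `p = (1, 0)`, where it
is the constant path; so for `q = (1, 1/(N+1))` close enough to `p`, the path `s (p, q)`
would stay in the half-plane `x > 0`. Along such a path the slope `y / x` varies
continuously from `0` to `1/(N+1)`, while on `combSpace` it only takes the values `0`
and `1/(n+1)`: the intermediate value theorem gives a contradiction. On the other hand a
contraction of any space yields a global (non-reserved) motion planner, so `tc = 0`.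
-/

open Set Filter Topology unitInterval

section MotionPlanners

variable {X : Type*} [TopologicalSpace X]

theorem exists_motionPlanner_of_contractibleSpace [ContractibleSpace X] :
    ∃ s : C(X × X, C(I, X)), ∀ p, s p 0 = p.1 ∧ s p 1 = p.2 := by
  obtain ⟨x₀, ⟨H⟩⟩ := id_nullhomotopic X
  let clamp : ℝ → I := projIcc 0 1 zero_le_one
  have hclamp : Continuous clamp := continuous_projIcc
  let F : (X × X) × I → X := fun a =>
    if (a.2 : ℝ) ≤ 1 / 2 then H (clamp (2 * a.2), a.1.1)
    else H (clamp (2 - 2 * a.2), a.1.2)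
  have hF : Continuous F := by
    refine Continuous.if_le (by fun_prop) (by fun_prop) (by fun_prop) continuous_const ?_
    intro a ha
    simp only [ha]
    norm_num [clamp]
  exact ⟨ContinuousMap.curry ⟨F, hF⟩, fun p => by norm_num [F, clamp]⟩

theorem tc_eq_zero_of_contractibleSpace [ContractibleSpace X] : tc X = 0 := by
  obtain ⟨s, hs⟩ := exists_motionPlanner_of_contractibleSpace (X := X)
  refine le_antisymm
    (sInf_le ⟨0, rfl, fun _ => univ, iUnion_const _, fun _ => ⟨isOpen_univ, ?_⟩⟩) bot_le
  exact ⟨s.comp ⟨Subtype.val, continuous_subtype_val⟩, fun a => Prod.ext (hs a).1 (hs a).2⟩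

theorem exists_reservedMotionPlanner_of_tcM_eq_zero (h : tcM X = 0) :
    ∃ s : C(X × X, C(I, X)), (∀ p, s p 0 = p.1 ∧ s p 1 = p.2) ∧ ∀ x t, s (x, x) t = x := by
  obtain ⟨n, hn, U, hcover, hU⟩ := ENat.sInf_eq_zero.1 h
  obtain rfl : n = 0 := by exact_mod_cast hn.symm
  have hmem (p : X × X) : p ∈ U 0 := by
    simpa [Fin.exists_fin_one] using iUnion_eq_univ_iff.1 hcover p
  obtain ⟨-, -, s, hends, hdiag⟩ := hU 0
  refine ⟨s.comp ⟨fun p => ⟨p, hmem p⟩, continuous_id.subtype_mk hmem⟩, fun p => ?_,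
    fun x => hdiag x (hmem (x, x))⟩
  exact Prod.ext_iff.1 (hends ⟨p, hmem p⟩)

theorem eventually_forall_mem_of_apply_diag_const {s : C(X × X, C(I, X))} {p : X}
    (hp : ∀ t, s (p, p) t = p) {V : Set X} (hV : IsOpen V) (hpV : p ∈ V) :
    ∀ᶠ q in 𝓝 p, ∀ t, s (p, q) t ∈ V := by
  have hs : Continuous fun q => s (p, q) := s.continuous.comp (Continuous.prodMk_right p)
  have hconst : MapsTo (s (p, p)) univ V := fun t _ => (hp t).symm ▸ hpV
  filter_upwards [hs.continuousAt.eventually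
    (ContinuousMap.eventually_mapsTo isCompact_univ hV hconst)] with q hq t using hq (mem_univ t)

end MotionPlanners

theorem starConvex_combSpace : StarConvex ℝ 0 combSpace :=
  ((convex_segment _ _).starConvex (left_mem_segment _ _ _)).union
    (starConvex_iUnion fun _ => (convex_segment _ _).starConvex (left_mem_segment _ _ _))

instance : ContractibleSpace combSpace :=
  starConvex_combSpace.contractibleSpace
    ⟨0, starConvex_combSpace.mem ⟨_, Or.inl (right_mem_segment _ _ _)⟩⟩

theorem snd_eq_zero_or_exists_of_mem_combSpace {z : ℝ × ℝ} (hz : z ∈ combSpace) :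
    z.2 = 0 ∨ ∃ n : ℕ, z.2 = z.1 / (n + 1) := by
  simp only [combSpace, mem_union, mem_iUnion, segment_eq_image] at hz
  rcases hz with ⟨θ, -, rfl⟩ | ⟨n, θ, -, rfl⟩
  · left; simp
  · right; exact ⟨n, by simp; ring⟩

theorem exists_fst_nonpos_of_combSpace_path (N : ℕ) (γ : C(I, combSpace))
    (h₀ : (γ 0 : ℝ × ℝ) = (1, 0)) (h₁ : (γ 1 : ℝ × ℝ) = (1, 1 / ((N : ℝ) + 1))) :
    ∃ t, (γ t : ℝ × ℝ).1 ≤ 0 := by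
  by_contra! hpos
  let slope : I → ℝ := fun t => (γ t : ℝ × ℝ).2 / (γ t : ℝ × ℝ).1
  have hslope : Continuous slope := Continuous.div (by fun_prop) (by fun_prop) (hpos · |>.ne')
  have hN : (0 : ℝ) < 2 * N + 3 := by positivity
  -- `2 / (2N + 3)` lies strictly between `1/(N+2)` and `1/(N+1)`, so it is not a slope.
  have hc : 2 / (2 * N + 3 : ℝ) ∈ Icc (slope 0) (slope 1) := by
    norm_num [slope, h₀, h₁]
    refine ⟨by positivity, ?_⟩
    rw [div_le_iff₀ hN]
    field_simp
    linarith
  obtain ⟨t, ht⟩ := intermediate_value_univ 0 1 hslope hc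
  simp only [slope] at ht
  rcases snd_eq_zero_or_exists_of_mem_combSpace (γ t).2 with h | ⟨n, h⟩
  · rw [h, zero_div] at ht
    exact (div_pos two_pos hN).ne ht
  · rw [h, div_div_cancel_left' (hpos t).ne', inv_eq_one_div,
      div_eq_div_iff (by positivity) hN.ne'] at ht
    have : 2 * N + 3 = 2 * (n + 1) := by
      exact_mod_cast (by linarith : (2 * N + 3 : ℝ) = 2 * (n + 1))
    omega

theorem not_exists_reservedMotionPlanner_combSpace :
    ¬ ∃ s : C(combSpace × combSpace, C(I, combSpace)),
      (∀ p, s p 0 = p.1 ∧ s p 1 = p.2) ∧ ∀ x t, s (x, x) t = x := by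
  rintro ⟨s, hends, hdiag⟩
  let p : combSpace := ⟨(1, 0), Or.inl (right_mem_segment _ _ _)⟩
  let q (n : ℕ) : combSpace :=
    ⟨(1, 1 / ((n : ℝ) + 1)), Or.inr (mem_iUnion.2 ⟨n, right_mem_segment _ _ _⟩)⟩
  have hq : Tendsto q atTop (𝓝 p) :=
    tendsto_subtype_rng.2 (tendsto_const_nhds.prodMk_nhds tendsto_one_div_add_atTop_nhds_zero_nat)
  have hV : IsOpen {z : combSpace | 0 < (z : ℝ × ℝ).1} :=
    isOpen_lt continuous_const (continuous_fst.comp continuous_subtype_val)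
  obtain ⟨N, hN⟩ := (hq.eventually
    (eventually_forall_mem_of_apply_diag_const (hdiag p) hV (by simp [p]))).exists
  obtain ⟨t, ht⟩ := exists_fst_nonpos_of_combSpace_path N (s (p, q N))
    (congrArg Subtype.val (hends (p, q N)).1) (congrArg Subtype.val (hends (p, q N)).2)
  exact (hN t).not_ge ht

/-- The space `combSpace` is contractible, yet it admits no globally continuous reserved
motion planner; in particular `tc^M(combSpace) > 0` while `tc(combSpace) = 0`, so the
monoidal topological complexity is not a homotopy invariant. -/
theorem combSpace_contractible_and_no_reserved_section :
    ContractibleSpace combSpace ∧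
      (¬ ∃ s : C(combSpace × combSpace, C(unitInterval, combSpace)),
        (∀ p : combSpace × combSpace, (s p) 0 = p.1 ∧ (s p) 1 = p.2) ∧
        ∀ (x : combSpace) (t : unitInterval), (s (x, x)) t = x) ∧
      0 < tcM combSpace ∧ tc combSpace = 0 :=
  ⟨inferInstance, not_exists_reservedMotionPlanner_combSpace,
    pos_iff_ne_zero.2 fun h =>
      not_exists_reservedMotionPlanner_combSpace (exists_reservedMotionPlanner_of_tcM_eq_zero h),
    tc_eq_zero_of_contractibleSpace⟩
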